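/- Let A be an abelian category whose derived category D(A) has Hom sets, and let τ = (U, U^⊥[1]) be a t-structure on D(A) with D(A)^{≤ -n} ⊆ U ⊆ D(A)^{≤ 0} for some natural number n. Set Y := A ∩ H_τ, where H_τ is the heart of τ and A is identified with the heart of the natural t-structure. If Y^• is a bounded complex 0 → Y^{-s} → Y^{-s+1} → ⋯ → Y^{-1} → Y^0 → 0 with all terms in Y, then Y^•, viewed as an object of D(A), lies in δ^{[-s,0]} ∩ τ^{[-s,0]}, i.e. in D(A)^{≤0} ∩ D(A)^{≥ -s} ∩ U ∩ U^⊥[1+s]. -/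

import Mathlib

/-!
Induct on the length of the complex. If `K` lives in degrees `[-s, 0]`, no differential enters
degree `-s`, so replacing `K^{-s}` by `0` gives a subcomplex `K'` with quotient `K^{-s}[s]`,
hence a distinguished triangle `K' → K → K^{-s}[s] → K'[1]` in `D(A)`. Each class of a
t-structure is an orthogonal of the other, so both are closed under extensions; moreover `U` is
stable under `[1]` and `V` under `[-1]`. As `K^{-s} ∈ U ∩ V`, we get `K^{-s}[s] ∈ U` and
`K^{-s}[s][-s] ∈ V`, and together with `K' ∈ U`, `K'[1-s] ∈ V` this gives `K ∈ U` and
`K[-s] ∈ V`. The homological bounds hold because `K` vanishes outside `[-s, 0]`.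
-/

open CategoryTheory Limits Pretriangulated

universe w v u

/-- A t-structure `(U, V)` on a triangulated category `D`, described by two strictly full
subcategories with the usual axioms. -/
structure TSPair (D : Type*) [Category D] [Preadditive D] [HasZeroObject D]
    [HasShift D ℤ] [∀ n : ℤ, (shiftFunctor D n).Additive] [Pretriangulated D]
    (U V : Set D) : Prop where
  iso_U : ∀ ⦃X Y : D⦄, (X ≅ Y) → X ∈ U → Y ∈ U
  iso_V : ∀ ⦃X Y : D⦄, (X ≅ Y) → X ∈ V → Y ∈ V
  hom_zero : ∀ ⦃X Y : D⦄, X ∈ U → Y ∈ V → ∀ f : X ⟶ Y⟦(-1 : ℤ)⟧, f = 0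
  shift_U : ∀ ⦃X : D⦄, X ∈ U → X⟦(1 : ℤ)⟧ ∈ U
  tri : ∀ X : D, ∃ (A B : D) (f : A ⟶ X) (g : X ⟶ B) (h : B ⟶ A⟦(1 : ℤ)⟧),
    A ∈ U ∧ B⟦(1 : ℤ)⟧ ∈ V ∧ Triangle.mk f g h ∈ distTriang D

variable (C : Type u) [Category.{v} C] [Abelian C] [HasDerivedCategory.{w} C]

/-- Membership in `D(A)^{≤ m}`: the homology vanishes in degrees `> m`. -/
def natLE (m : ℤ) (X : DerivedCategory C) : Prop :=
  ∀ k : ℤ, m < k → IsZero ((DerivedCategory.homologyFunctor C k).obj X)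

/-- Membership in `D(A)^{≥ m}`: the homology vanishes in degrees `< m`. -/
def natGE (m : ℤ) (X : DerivedCategory C) : Prop :=
  ∀ k : ℤ, k < m → IsZero ((DerivedCategory.homologyFunctor C k).obj X)

/-- An object `A₀` of the abelian category `C` belongs to `Y = A ∩ H_τ`, the class of
objects of `A` lying in the heart `H_τ = U ∩ V` of the t-structure `(U, V)` on `D(A)`,
`A` being identified with the heart of the natural t-structure via the functor
sending `A₀` to the complex `A₀` concentrated in degree `0`. -/
def memY (U V : Set (DerivedCategory C)) (A₀ : C) : Prop :=
  (DerivedCategory.singleFunctor C 0).obj A₀ ∈ U ∧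
    (DerivedCategory.singleFunctor C 0).obj A₀ ∈ V

namespace TSPair

variable {D : Type*} [Category D] [Preadditive D] [HasZeroObject D]
    [HasShift D ℤ] [∀ n : ℤ, (shiftFunctor D n).Additive] [Pretriangulated D]
    {U V : Set D}

lemma hom_eq_zero_of_shift_one_mem_V (τ : TSPair D U V) {X W : D} (hX : X ∈ U)
    (hW : W⟦(1 : ℤ)⟧ ∈ V) (f : X ⟶ W) : f = 0 := by
  rw [← cancel_mono ((shiftFunctorCompIsoId D (1 : ℤ) (-1) (by omega)).inv.app W), zero_comp]
  exact τ.hom_zero hX hW _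

lemma hom_shift_neg_one_eq_zero (τ : TSPair D U V) {X W : D} (hX : X ∈ U)
    (hW : W⟦(1 : ℤ)⟧ ∈ V) (f : X ⟶ W⟦(-1 : ℤ)⟧) : f = 0 := by
  rw [← (shiftFunctor D (1 : ℤ)).map_eq_zero_iff,
    ← cancel_mono ((shiftFunctorCompIsoId D (-1 : ℤ) 1 (by omega)).hom.app W), zero_comp]
  exact τ.hom_eq_zero_of_shift_one_mem_V (τ.shift_U hX) hW _

lemma mem_U_of_hom_eq_zero (τ : TSPair D U V) {X : D}
    (h : ∀ W : D, W⟦(1 : ℤ)⟧ ∈ V → ∀ f : X ⟶ W, f = 0) : X ∈ U := by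
  obtain ⟨A, B, f, g, δ, hA, hB, hT⟩ := τ.tri X
  obtain ⟨φ, hφ⟩ :=
    Triangle.yoneda_exact₃ _ hT (𝟙 B) ((Category.comp_id g).trans (h B hB g))
  have hB0 : IsZero B := by
    rw [IsZero.iff_id_eq_zero, hφ, τ.hom_eq_zero_of_shift_one_mem_V (τ.shift_U hA) hB φ]
    exact comp_zero
  have : IsIso f := (Triangle.isZero₃_iff_isIso₁ _ hT).1 hB0
  exact τ.iso_U (asIso f) hA

lemma mem_V_of_hom_eq_zero (τ : TSPair D U V) {W : D}
    (h : ∀ X ∈ U, ∀ f : X ⟶ W⟦(-1 : ℤ)⟧, f = 0) : W ∈ V := by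
  obtain ⟨A, B, f, g, δ, hA, hB, hT⟩ := τ.tri (W⟦(-1 : ℤ)⟧)
  obtain ⟨σ, hσ⟩ := Triangle.coyoneda_exact₂ _ (inv_rot_of_distTriang _ hT) (𝟙 A)
    ((Category.id_comp f).trans (h A hA f))
  have hA0 : IsZero A := by
    rw [IsZero.iff_id_eq_zero, hσ, τ.hom_shift_neg_one_eq_zero hA hB σ]
    exact zero_comp
  have : IsIso g := (Triangle.isZero₁_iff_isIso₂ _ hT).1 hA0
  exact τ.iso_V ((shiftFunctor D (1 : ℤ)).mapIso (asIso g).symm ≪≫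
    (shiftFunctorCompIsoId D (-1 : ℤ) 1 (by omega)).app W) hB

lemma mem_U_of_distTriang (τ : TSPair D U V) {T : Triangle D} (hT : T ∈ distTriang D)
    (h₁ : T.obj₁ ∈ U) (h₃ : T.obj₃ ∈ U) : T.obj₂ ∈ U := by
  refine τ.mem_U_of_hom_eq_zero fun W hW f => ?_
  obtain ⟨g, hg⟩ :=
    Triangle.yoneda_exact₂ _ hT f (τ.hom_eq_zero_of_shift_one_mem_V h₁ hW _)
  rw [hg, τ.hom_eq_zero_of_shift_one_mem_V h₃ hW g, comp_zero]

lemma mem_V_of_distTriang (τ : TSPair D U V) {T : Triangle D} (hT : T ∈ distTriang D)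
    (h₁ : T.obj₁ ∈ V) (h₃ : T.obj₃ ∈ V) : T.obj₂ ∈ V := by
  refine τ.mem_V_of_hom_eq_zero fun X hX f => ?_
  obtain ⟨g, hg⟩ := Triangle.coyoneda_exact₂ _ (Triangle.shift_distinguished T hT (-1 : ℤ))
    f (τ.hom_zero hX h₃ _)
  rw [hg, τ.hom_zero hX h₁ g]
  exact zero_comp

lemma shift_mem_U (τ : TSPair D U V) {X : D} (hX : X ∈ U) {a : ℤ} (ha : 0 ≤ a) :
    X⟦a⟧ ∈ U := by
  induction a, ha using Int.leInduction with
  | base => exact τ.iso_U ((shiftFunctorZero D ℤ).symm.app X) hX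
  | succ a _ ih =>
    exact τ.iso_U ((shiftFunctorAdd' D a 1 (a + 1) rfl).symm.app X) (τ.shift_U ih)

lemma shift_neg_one_mem_V (τ : TSPair D U V) {W : D} (hW : W ∈ V) : W⟦(-1 : ℤ)⟧ ∈ V :=
  τ.mem_V_of_hom_eq_zero fun _ hX => τ.hom_shift_neg_one_eq_zero hX
    (τ.iso_V ((shiftFunctorCompIsoId D (-1 : ℤ) 1 (by omega)).symm.app W) hW)

lemma mem_U_of_isZero (τ : TSPair D U V) {X : D} (hX : IsZero X) : X ∈ U :=
  τ.mem_U_of_hom_eq_zero fun _ _ f => hX.eq_of_src f 0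

lemma mem_V_of_isZero (τ : TSPair D U V) {W : D} (hW : IsZero W) : W ∈ V :=
  τ.mem_V_of_hom_eq_zero fun _ _ f => ((shiftFunctor D (-1 : ℤ)).map_isZero hW).eq_of_tgt f 0

end TSPair

namespace CochainComplex

open HomologicalComplex ZeroObject

variable {A : Type*} [Category* A]

section

variable [HasZeroMorphisms A] [HasZeroObject A] (K : CochainComplex A ℤ) (p : ℤ)

noncomputable def drop : CochainComplex A ℤ where
  X i := if i = p then 0 else K.X i
  d i j :=
    if hi : i = p then 0
    else if hj : j = p then 0
    else eqToHom (by rw [if_neg hi]) ≫ K.d i j ≫ eqToHom (by rw [if_neg hj])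
  shape i j hij := by
    by_cases hi : i = p <;> by_cases hj : j = p <;> simp [hi, hj, K.shape i j hij]
  d_comp_d' i j k _ _ := by
    by_cases hi : i = p <;> by_cases hj : j = p <;> by_cases hk : k = p <;> simp [hi, hj, hk]

lemma drop_X_of_ne {i : ℤ} (hi : i ≠ p) : (K.drop p).X i = K.X i := if_neg hi

lemma isZero_drop_X_self : IsZero ((K.drop p).X p) := by
  dsimp only [drop]
  rw [if_pos rfl]
  exact isZero_zero A

variable {K p}

noncomputable def dropι (hd : ∀ i, K.d i p = 0) : K.drop p ⟶ K where
  f i := if hi : i = p then 0 else eqToHom (K.drop_X_of_ne p hi)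
  comm' i j _ := by
    by_cases hi : i = p
    · subst hi
      exact (K.isZero_drop_X_self i).eq_of_src _ _
    by_cases hj : j = p
    · subst hj
      rw [hd, comp_zero, (K.isZero_drop_X_self j).eq_of_tgt ((K.drop j).d i j) 0, zero_comp]
    · simp only [drop, hi, hj, ↓reduceDIte, Category.assoc]
      erw [eqToHom_trans, eqToHom_refl, Category.comp_id]

noncomputable def dropπ (hd : ∀ i, K.d i p = 0) :
    K ⟶ (single A (ComplexShape.up ℤ) p).obj (K.X p) :=
  mkHomToSingle (𝟙 _) fun i _ => by rw [hd, zero_comp]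

noncomputable def dropShortComplex (hd : ∀ i, K.d i p = 0) :
    ShortComplex (CochainComplex A ℤ) :=
  ShortComplex.mk (dropι hd) (dropπ hd) (by
    refine HomologicalComplex.hom_ext _ _ fun i => ?_
    by_cases hi : i = p
    · subst hi
      exact (K.isZero_drop_X_self i).eq_of_src _ _
    · exact (isZero_single_obj_X (ComplexShape.up ℤ) p _ i hi).eq_of_tgt _ _)

end

lemma dropShortComplex_shortExact [Abelian A] {K : CochainComplex A ℤ} {p : ℤ}
    (hd : ∀ i, K.d i p = 0) : (dropShortComplex hd).ShortExact := by
  refine shortExact_of_degreewise_shortExact _ fun i => ?_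
  by_cases hi : i = p
  · subst hi
    have : IsIso ((dropπ hd).f i) := by
      rw [dropπ, mkHomToSingle_f]
      infer_instance
    exact (ShortComplex.Splitting.ofIsZeroOfIsIso _ (K.isZero_drop_X_self i) this).shortExact
  · have : IsIso ((dropι hd).f i) := by
      dsimp only [dropι]
      rw [dif_neg hi]
      infer_instance
    exact (ShortComplex.Splitting.ofIsIsoOfIsZero _ this
      (isZero_single_obj_X (ComplexShape.up ℤ) p _ i hi)).shortExact

end CochainComplex

open DerivedCategory

section

variable {C}

lemma isZero_homologyFunctor_obj_Q_of_isZero_X {K : CochainComplex C ℤ} {k : ℤ}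
    (hk : IsZero (K.X k)) : IsZero ((homologyFunctor C k).obj (Q.obj K)) :=
  (HomologicalComplex.ExactAt.of_isZero hk).isZero_homology.of_iso
    ((homologyFunctorFactors C k).app K)

variable {U V : Set (DerivedCategory C)}

lemma TSPair.singleFunctor_obj_mem_U (τ : TSPair (DerivedCategory C) U V) {X : C}
    (hX : memY C U V X) {p : ℤ} (hp : p ≤ 0) : (singleFunctor C p).obj X ∈ U :=
  τ.iso_U (((singleFunctors C).shiftIso (-p) p 0 (by omega)).app X)
    (τ.shift_mem_U hX.1 (by omega))

lemma TSPair.singleFunctor_obj_shift_mem_V (τ : TSPair (DerivedCategory C) U V) {X : C}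
    (hX : memY C U V X) (p : ℤ) : ((singleFunctor C p).obj X)⟦p⟧ ∈ V :=
  τ.iso_V (((singleFunctors C).shiftIso p 0 p (by omega)).app X).symm hX.2

theorem TSPair.Q_obj_mem_U_and_shift_mem_V (τ : TSPair (DerivedCategory C) U V) {s : ℤ}
    (hs : -1 ≤ s) (K : CochainComplex C ℤ)
    (hK : ∀ i : ℤ, (i < -s ∨ 0 < i) → IsZero (K.X i))
    (hKY : ∀ i : ℤ, -s ≤ i → i ≤ 0 → memY C U V (K.X i)) :
    Q.obj K ∈ U ∧ (Q.obj K)⟦-s⟧ ∈ V := by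
  induction s, hs using Int.leInduction generalizing K with
  | base =>
    have hK0 : IsZero (Q.obj K) := Q.map_isZero (by
      rw [IsZero.iff_id_eq_zero]
      ext i
      exact (hK i (by omega)).eq_of_src _ _)
    exact ⟨τ.mem_U_of_isZero hK0, τ.mem_V_of_isZero ((shiftFunctor _ _).map_isZero hK0)⟩
  | succ s hs ih =>
    set p := -(s + 1)
    have hd : ∀ i, K.d i p = 0 := fun i => by
      by_cases hi : i + 1 = p
      · exact (hK i (Or.inl (by omega))).eq_of_src _ _
      · exact K.shape i p hi
    obtain ⟨hdropU, hdropV⟩ := ih (K.drop p)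
      (fun i hi => by
        by_cases hip : i = p
        · subst hip
          exact K.isZero_drop_X_self _
        · rw [K.drop_X_of_ne p hip]
          exact hK i (by omega))
      (fun i hi₁ hi₂ => by
        rw [K.drop_X_of_ne p (by omega)]
        exact hKY i (by omega) hi₂)
    have hp : memY C U V (K.X p) := hKY p (by omega) (by omega)
    have hT := triangleOfSES_distinguished (CochainComplex.dropShortComplex_shortExact hd)
    refine ⟨τ.mem_U_of_distTriang hT hdropU (τ.singleFunctor_obj_mem_U hp (by omega)), ?_⟩
    refine τ.mem_V_of_distTriang (Triangle.shift_distinguished _ hT p) ?_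
      (τ.singleFunctor_obj_shift_mem_V hp p)
    exact τ.iso_V ((shiftFunctorAdd' _ (-s) (-1) p (by omega)).symm.app _)
      (τ.shift_neg_one_mem_V hdropV)

end

theorem stmt_5 (U V : Set (DerivedCategory C)) (τ : TSPair (DerivedCategory C) U V)
    (s : ℕ) (K : CochainComplex C ℤ)
    (hKbdd : ∀ i : ℤ, (i < -(s : ℤ) ∨ 0 < i) → IsZero (K.X i))
    (hKY : ∀ i : ℤ, -(s : ℤ) ≤ i → i ≤ 0 → memY C U V (K.X i)) :
    natLE C 0 (DerivedCategory.Q.obj K) ∧ natGE C (-(s : ℤ)) (DerivedCategory.Q.obj K) ∧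
      DerivedCategory.Q.obj K ∈ U ∧ ((DerivedCategory.Q.obj K)⟦-(s : ℤ)⟧ ∈ V) := by
  obtain ⟨hU, hV⟩ := τ.Q_obj_mem_U_and_shift_mem_V (by omega) K hKbdd hKY
  exact ⟨fun k hk => isZero_homologyFunctor_obj_Q_of_isZero_X (hKbdd k (Or.inr hk)),
    fun k hk => isZero_homologyFunctor_obj_Q_of_isZero_X (hKbdd k (Or.inl hk)), hU, hV⟩
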